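/- The map l : B → End_R(A), l(b)(a) = b·a, is a ring isomorphism from B onto the ring of right R-module endomorphisms of A (product = composition), and the map g : Q → Hom_R(A,R), g(q)(a) = q·i(a), is a bijection from Q onto the set of right R-module maps from A to R. -/
import Mathlib


/-!
`l : B → End_R(A)`, `l b a = b * a`, is a ring isomorphism onto the ring of right
`R`-module endomorphisms of `A` (where `A` is a right `R`-module via `a ↼ r = χ (i a * r)`),
and `g : Q → Hom_R(A,R)`, `g q a = q * i a`, is a bijection onto the right `R`-module maps.
-/

theorem endB_homQ_iso
    {A R : Type*} [Ring A] [Ring R] (i : A →+* R) (χ : R → A)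
    (hadd : ∀ r s : R, χ (r + s) = χ r + χ s)
    (h1 : ∀ (r : R) (a : A), χ (r * i a) = χ r * a)
    (h2 : ∀ r s : R, χ (i (χ r) * s) = χ (r * s))
    (h3 : χ 1 = 1)
    (B : Set A) (hB : B = {b : A | ∀ r : R, b * χ r = χ (i b * r)})
    (Q : Set R) (hQ : Q = {q : R | ∀ r : R, q * r = q * i (χ r)})
    -- End_R(A) : additive maps A → A commuting with the right R-action a ↼ r = χ (i a * r)
    (EndR : Set (A → A))
    (hEndR : EndR = {g : A → A | (∀ a a' : A, g (a + a') = g a + g a') ∧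
      (∀ (a : A) (r : R), g (χ (i a * r)) = χ (i (g a) * r))})
    -- Hom_R(A,R) : additive right R-linear maps A → R
    (HomR : Set (A → R))
    (hHomR : HomR = {φ : A → R | (∀ a a' : A, φ (a + a') = φ a + φ a') ∧
      (∀ (a : A) (r : R), φ (χ (i a * r)) = φ a * r)}) :
    -- l b := (a ↦ b * a) maps B into End_R(A)
    (∀ b ∈ B, (fun a : A => b * a) ∈ EndR) ∧
    -- l is injective on B
    (∀ b ∈ B, ∀ b' ∈ B, (fun a : A => b * a) = (fun a : A => b' * a) → b = b') ∧
    -- l is surjective onto End_R(A)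
    (∀ g ∈ EndR, ∃ b ∈ B, ∀ a : A, g a = b * a) ∧
    -- l is a ring morphism: additive, multiplicative (product = composition), unital
    (∀ b b' a : A, (b + b') * a = b * a + b' * a) ∧
    (∀ b b' a : A, (b * b') * a = b * (b' * a)) ∧
    (∀ a : A, (1 : A) * a = a) ∧
    -- g q := (a ↦ q * i a) maps Q into Hom_R(A,R)
    (∀ q ∈ Q, (fun a : A => q * i a) ∈ HomR) ∧
    -- g is injective on Q
    (∀ q ∈ Q, ∀ q' ∈ Q, (fun a : A => q * i a) = (fun a : A => q' * i a) → q = q') ∧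
    -- g is surjective onto Hom_R(A,R)
    (∀ φ ∈ HomR, ∃ q ∈ Q, ∀ a : A, φ a = q * i a) := by
  subst hB hQ hEndR hHomR
  have hχi : ∀ a : A, χ (i a) = a := by
    intro a
    have := h1 1 a
    simpa [h3] using this
  refine ⟨?_, ?_, ?_, ?_, ?_, ?_, ?_, ?_, ?_⟩
  · intro b hb
    refine ⟨fun a a' => mul_add b a a', fun a r => ?_⟩
    calc b * χ (i a * r) = χ (i b * (i a * r)) := hb _
      _ = χ (i (b * a) * r) := by rw [map_mul, mul_assoc]
  · intro b hb b' hb' h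
    have := congrFun h 1
    simpa using this
  · intro g hg
    obtain ⟨hgadd, hgr⟩ := hg
    have key : ∀ r : R, g (χ r) = χ (i (g 1) * r) := by
      intro r
      have := hgr 1 r
      simpa [map_one] using this
    have hba : ∀ a : A, g a = g 1 * a := by
      intro a
      have := key (i a)
      rw [hχi, h1] at this
      rw [this, hχi]
    refine ⟨g 1, fun r => ?_, hba⟩
    rw [← hba (χ r), key]
  · exact fun b b' a => add_mul b b' a
  · exact fun b b' a => mul_assoc b b' a
  · exact fun a => one_mul a
  · intro q hq
    refine ⟨fun a a' => by simp [map_add, mul_add], fun a r => ?_⟩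
    calc q * i (χ (i a * r)) = q * (i a * r) := (hq (i a * r)).symm
      _ = q * i a * r := (mul_assoc _ _ _).symm
  · intro q hq q' hq' h
    have := congrFun h 1
    simpa using this
  · intro φ hφ
    obtain ⟨hφadd, hφr⟩ := hφ
    have key : ∀ r : R, φ (χ r) = φ 1 * r := by
      intro r
      have := hφr 1 r
      simpa [map_one] using this
    have hχχ : ∀ r : R, χ (i (χ r)) = χ r := by
      intro r
      have := h2 r 1
      simpa using this
    refine ⟨φ 1, fun r => ?_, fun a => ?_⟩
    · rw [← key r, ← key (i (χ r)), hχχ]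
    · rw [← key (i a), hχi]
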